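/- Approximation error of a minimum-norm solution: Let b = A x* + e with supp(x*) = Λ, |Λ| = k, and let Γ be an index set of size k such that A_Γ^T A_Γ is invertible. Define x̄ by x̄_Γ = A_Γ^† b and x̄_{Γ^C} = 0, where A_Γ^† = (A_Γ^T A_Γ)^{-1} A_Γ^T. Then ‖x̄ − x*‖² ≤ ( ‖A_Γ^† A_{Λ∖Γ} x*_{Λ∖Γ}‖ + ‖A_Γ^† e‖ )² + ‖x*_{Λ∖Γ}‖². -/

import Mathlib

open scoped Classical
open Finset Matrix

/-- Euclidean norm of a finitely indexed real vector. -/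
noncomputable def euclNorm {m : Type*} [Fintype m] (x : m → ℝ) : ℝ :=
  Real.sqrt (∑ i, (x i) ^ 2)

/-- The column submatrix of `A` indexed by the finset `Γ`. -/
def colSub {n N : ℕ} (A : Matrix (Fin n) (Fin N) ℝ) (Γ : Finset (Fin N)) :
    Matrix (Fin n) Γ ℝ := fun i j => A i j.1

/-- The Moore–Penrose pseudoinverse `A_Γ^† = (A_Γᵀ A_Γ)⁻¹ A_Γᵀ`. -/
noncomputable def pinv {n N : ℕ} (A : Matrix (Fin n) (Fin N) ℝ) (Γ : Finset (Fin N)) :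
    Matrix Γ (Fin n) ℝ := ((colSub A Γ)ᵀ * colSub A Γ)⁻¹ * (colSub A Γ)ᵀ

/-!
Since `A_Γ^† A_Γ = 1` and `x*` vanishes off `Γ ∪ (Λ \ Γ)`, the error `x̄ - x*` equals
`A_Γ^† A_{Λ∖Γ} x*_{Λ∖Γ} + A_Γ^† e` on `Γ`, which the triangle inequality bounds, and `-x*` off `Γ`,
whose only nonzero entries lie in `Λ \ Γ`.
-/

section euclNorm

variable {m : Type*} [Fintype m]

theorem euclNorm_eq_norm_toLp (x : m → ℝ) :
    euclNorm x = ‖(WithLp.toLp 2 x : EuclideanSpace ℝ m)‖ := by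
  simp [euclNorm, EuclideanSpace.norm_eq]

theorem euclNorm_add_le (x y : m → ℝ) : euclNorm (x + y) ≤ euclNorm x + euclNorm y := by
  simpa only [euclNorm_eq_norm_toLp, WithLp.toLp_add] using norm_add_le _ _

theorem sum_sq_eq_euclNorm_sq (x : m → ℝ) : ∑ i, x i ^ 2 = euclNorm x ^ 2 :=
  (Real.sq_sqrt (by positivity)).symm

theorem sum_add_sq_le_sq_euclNorm_add (x y : m → ℝ) :
    ∑ i, (x i + y i) ^ 2 ≤ (euclNorm x + euclNorm y) ^ 2 :=
  calc ∑ i, (x i + y i) ^ 2 = euclNorm (x + y) ^ 2 := sum_sq_eq_euclNorm_sq (x + y)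
    _ ≤ (euclNorm x + euclNorm y) ^ 2 := by
      gcongr
      · exact Real.sqrt_nonneg _
      · exact euclNorm_add_le x y

end euclNorm

section colSub

variable {n N : ℕ} (A : Matrix (Fin n) (Fin N) ℝ)

theorem colSub_mulVec_restrict (S : Finset (Fin N)) (x : Fin N → ℝ) (i : Fin n) :
    (colSub A S *ᵥ S.restrict x) i = ∑ l ∈ S, A i l * x l :=
  Finset.sum_coe_sort S fun l => A i l * x l

theorem mulVec_eq_colSub_add_colSub {S T : Finset (Fin N)} (hST : Disjoint S T)
    {x : Fin N → ℝ} (hx : ∀ l ∉ S ∪ T, x l = 0) :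
    A *ᵥ x = colSub A S *ᵥ S.restrict x + colSub A T *ᵥ T.restrict x := by
  funext i
  rw [Pi.add_apply, colSub_mulVec_restrict, colSub_mulVec_restrict, ← sum_union hST]
  symm
  exact sum_subset (subset_univ _) fun l _ hl => by rw [hx l hl, mul_zero]

theorem pinv_mul_colSub {Γ : Finset (Fin N)} (hinv : IsUnit ((colSub A Γ)ᵀ * colSub A Γ)) :
    pinv A Γ * colSub A Γ = 1 := by
  rw [pinv, Matrix.mul_assoc]
  exact nonsing_inv_mul _ ((isUnit_iff_isUnit_det _).mp hinv)

end colSub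

theorem sum_compl_eq_sum_sdiff {α M : Type*} [Fintype α] [DecidableEq α] [AddCommMonoid M]
    {f : α → M} {Λ : Finset α} (hf : ∀ l ∉ Λ, f l = 0) (Γ : Finset α) :
    ∑ l ∈ Γᶜ, f l = ∑ l ∈ Λ \ Γ, f l := by
  refine (sum_subset (fun l hl => mem_compl.mpr (mem_sdiff.mp hl).2) fun l hl hl' => ?_).symm
  exact hf l fun hlΛ => hl' (mem_sdiff.mpr ⟨hlΛ, mem_compl.mp hl⟩)

theorem min_norm_solution_error_bound_general {n N : ℕ}
    (A : Matrix (Fin n) (Fin N) ℝ) (e : Fin n → ℝ) (xstar : Fin N → ℝ)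
    (Λ Γ : Finset (Fin N)) (hΛ : ∀ i, xstar i ≠ 0 ↔ i ∈ Λ)
    (hinv : IsUnit ((colSub A Γ)ᵀ * colSub A Γ))
    (b : Fin n → ℝ) (hb : b = A.mulVec xstar + e)
    (xb : Fin N → ℝ) (hsupp : ∀ i ∉ Γ, xb i = 0)
    (hxb : ∀ j : Γ, xb j.1 = (pinv A Γ).mulVec b j) :
    ∑ i, (xb i - xstar i) ^ 2
      ≤ (euclNorm ((pinv A Γ * colSub A (Λ \ Γ)).mulVec fun j : ↥(Λ \ Γ) => xstar j.1)
            + euclNorm ((pinv A Γ).mulVec e)) ^ 2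
        + ∑ j : ↥(Λ \ Γ), (xstar j.1) ^ 2 := by
  set u := (pinv A Γ * colSub A (Λ \ Γ)) *ᵥ fun j : ↥(Λ \ Γ) => xstar j.1
  set v := pinv A Γ *ᵥ e
  have hxstar : ∀ l ∉ Λ, xstar l = 0 := fun l hl => not_not.mp (mt (hΛ l).mp hl)
  have hsplit := mulVec_eq_colSub_add_colSub A (disjoint_sdiff : Disjoint Γ (Λ \ Γ)) (x := xstar)
    fun l hl => hxstar l fun hlΛ => hl <| by
      rw [union_sdiff_self_eq_union]
      exact mem_union_right _ hlΛ
  have hpinv_b : pinv A Γ *ᵥ b = Γ.restrict xstar + (u + v) := by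
    rw [hb, mulVec_add, hsplit, mulVec_add, mulVec_mulVec, pinv_mul_colSub A hinv, one_mulVec,
      mulVec_mulVec, add_assoc]
    rfl
  have herr : ∀ j : Γ, xb j - xstar j = u j + v j := fun j => by
    rw [hxb j, hpinv_b]
    exact add_sub_cancel_left _ _
  calc ∑ i, (xb i - xstar i) ^ 2
      = ∑ j : Γ, (u j + v j) ^ 2 + ∑ l ∈ Γᶜ, xstar l ^ 2 := by
        rw [← sum_add_sum_compl Γ, ← sum_coe_sort Γ]
        congr 1
        · exact sum_congr rfl fun j _ => by rw [herr j]
        · exact sum_congr rfl fun l hl => by rw [hsupp l (mem_compl.mp hl), zero_sub, neg_sq]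
    _ = ∑ j : Γ, (u j + v j) ^ 2 + ∑ j : ↥(Λ \ Γ), xstar j ^ 2 := by
        rw [sum_compl_eq_sum_sdiff (fun l hl => by simp [hxstar l hl]),
          ← sum_coe_sort (Λ \ Γ)]
    _ ≤ _ := add_le_add_left (sum_add_sq_le_sq_euclNorm_add u v) _

/-- approximation error of the minimum-norm solution on `Γ`. -/
theorem min_norm_solution_error_bound {n N k : ℕ}
    (A : Matrix (Fin n) (Fin N) ℝ) (e : Fin n → ℝ) (xstar : Fin N → ℝ)
    (Λ Γ : Finset (Fin N)) (hΛ : ∀ i, xstar i ≠ 0 ↔ i ∈ Λ)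
    (hΛcard : Λ.card = k) (hΓcard : Γ.card = k)
    (hinv : IsUnit ((colSub A Γ)ᵀ * colSub A Γ))
    (b : Fin n → ℝ) (hb : b = A.mulVec xstar + e)
    (xb : Fin N → ℝ) (hsupp : ∀ i ∉ Γ, xb i = 0)
    (hxb : ∀ j : Γ, xb j.1 = (pinv A Γ).mulVec b j) :
    ∑ i, (xb i - xstar i) ^ 2
      ≤ (euclNorm ((pinv A Γ * colSub A (Λ \ Γ)).mulVec fun j : ↥(Λ \ Γ) => xstar j.1)
            + euclNorm ((pinv A Γ).mulVec e)) ^ 2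
        + ∑ j : ↥(Λ \ Γ), (xstar j.1) ^ 2 :=
  min_norm_solution_error_bound_general A e xstar Λ Γ hΛ hinv b hb xb hsupp hxb
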